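/- arXiv:1710.10783 — 8 statements merged into one kernel-verified Lean document; each statement's English description precedes it below -/
import Mathlib

section
/- Let α, γ ∈ l¹(ℤ) with S_α the subdivision operator (S_α c)_k = ∑_ℓ α_{k-2ℓ} c_ℓ and D_γ the decimation operator (D_γ c)_k = ∑_ℓ γ_{k-ℓ} c_{2ℓ}. Then the detail d = (Id - S_α D_γ)c satisfies d_{2k} = 0 for all k ∈ ℤ and all c ∈ l∞(ℤ) if and only if γ * α_ev = δ, i.e. γ is the convolution inverse of the even part α_ev of α (where (α_ev)_k = α_{2k}). -/
/-!
Since `(S_α D_γ c)_{2k} = ∑_m (∑_j γ_j α_{2(k-m-j)}) c_{2m}` (an absolutely convergent double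
sum, so the order of summation may be exchanged), the even samples of the detail vanish for every
bounded `c` as soon as this kernel is `δ_{k-m}`, i.e. `γ * α_ev = δ`. Conversely, testing on
`c = δ`, for which `D_γ δ = γ`, reads off `(γ * α_ev)_k` as the even sample `δ_{2k}`.
-/

/-- The subdivision operator `(S_α c)_k = ∑_ℓ α_{k-2ℓ} c_ℓ`. -/
noncomputable def subdOp (α : ℤ → ℝ) (c : ℤ → ℝ) : ℤ → ℝ :=
  fun k => ∑' l : ℤ, α (k - 2 * l) * c l

/-- The decimation operator `(D_γ c)_k = ∑_ℓ γ_{k-ℓ} c_{2ℓ}`. -/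
noncomputable def decimOp (γ : ℤ → ℝ) (c : ℤ → ℝ) : ℤ → ℝ :=
  fun k => ∑' l : ℤ, γ (k - l) * c (2 * l)

lemma decimOp_single_zero (γ : ℤ → ℝ) : decimOp γ (Pi.single 0 1) = γ := by
  funext k
  rw [decimOp, tsum_eq_single 0 fun l hl => by simp [hl]]
  simp

lemma subdOp_apply_two_mul (α d : ℤ → ℝ) (k : ℤ) :
    subdOp α d (2 * k) = ∑' l : ℤ, d l * α (2 * (k - l)) := by
  simp only [subdOp, mul_sub, mul_comm (α _)]

section Kernel

variable {α γ c : ℤ → ℝ} {M : ℝ}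

lemma summable_subdOp_decimOp_kernel (hα : Summable fun k : ℤ => |α k|)
    (hγ : Summable fun k : ℤ => |γ k|) (hc : ∀ k, |c k| ≤ M) (k : ℤ) :
    Summable fun p : ℤ × ℤ => α (k - 2 * p.1) * (γ (p.1 - p.2) * c (2 * p.2)) := by
  have hinj : Function.Injective fun p : ℤ × ℤ => (k - 2 * p.1, p.1 - p.2) := by
    intro p q h
    simp only [Prod.mk.injEq] at h
    ext <;> omega
  have hbound : Summable fun p : ℤ × ℤ => |α (k - 2 * p.1)| * |γ (p.1 - p.2)| * M :=
    ((hα.mul_of_nonneg hγ (fun _ => abs_nonneg _) (fun _ => abs_nonneg _)).comp_injective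
      hinj).mul_right M
  refine hbound.of_norm_bounded fun p => ?_
  rw [Real.norm_eq_abs, abs_mul, abs_mul, ← mul_assoc]
  exact mul_le_mul_of_nonneg_left (hc _) (by positivity)

lemma subdOp_decimOp_eq_tsum_kernel (hα : Summable fun k : ℤ => |α k|)
    (hγ : Summable fun k : ℤ => |γ k|) (hc : ∀ k, |c k| ≤ M) (k : ℤ) :
    subdOp α (decimOp γ c) k = ∑' m : ℤ, (∑' l : ℤ, α (k - 2 * l) * γ (l - m)) * c (2 * m) := by
  calc subdOp α (decimOp γ c) k
      = ∑' (l : ℤ) (m : ℤ), α (k - 2 * l) * (γ (l - m) * c (2 * m)) := by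
        simp only [subdOp, decimOp, tsum_mul_left]
    _ = ∑' (m : ℤ) (l : ℤ), α (k - 2 * l) * (γ (l - m) * c (2 * m)) :=
        (summable_subdOp_decimOp_kernel hα hγ hc k).tsum_comm.symm
    _ = ∑' m : ℤ, (∑' l : ℤ, α (k - 2 * l) * γ (l - m)) * c (2 * m) := by
        simp only [← tsum_mul_right, mul_assoc]

end Kernel

lemma tsum_subdOp_kernel_two_mul (α γ : ℤ → ℝ) (k m : ℤ) :
    ∑' l : ℤ, α (2 * k - 2 * l) * γ (l - m) = ∑' j : ℤ, γ j * α (2 * ((k - m) - j)) := by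
  rw [← (Equiv.addLeft m).tsum_eq]
  congr 1
  funext j
  simp only [Equiv.coe_addLeft]
  ring_nf

/-- The detail `d = (Id - S_α D_γ) c` vanishes on even indices for every bounded
sequence `c` if and only if `γ` is the convolution inverse of the even part of `α`. -/
theorem detail_even_vanish_iff (α γ : ℤ → ℝ)
    (hα : Summable (fun k : ℤ => |α k|)) (hγ : Summable (fun k : ℤ => |γ k|)) :
    (∀ c : ℤ → ℝ, (∃ M : ℝ, ∀ k : ℤ, |c k| ≤ M) →
        ∀ k : ℤ, c (2 * k) - subdOp α (decimOp γ c) (2 * k) = 0)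
      ↔ (∀ k : ℤ, (∑' l : ℤ, γ l * α (2 * (k - l))) = if k = 0 then 1 else 0) := by
  constructor
  · intro H k
    have hδ : ∃ M : ℝ, ∀ k : ℤ, |(Pi.single 0 1 : ℤ → ℝ) k| ≤ M :=
      ⟨1, fun n => by by_cases hn : n = 0 <;> simp [hn]⟩
    have h := H _ hδ k
    rw [decimOp_single_zero, subdOp_apply_two_mul, Pi.single_apply] at h
    simp only [mul_eq_zero, two_ne_zero, false_or] at h
    linarith
  · rintro H c ⟨M, hM⟩ k
    rw [subdOp_decimOp_eq_tsum_kernel hα hγ hM, sub_eq_zero]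
    simp only [tsum_subdOp_kernel_two_mul, H, sub_eq_zero, ite_mul, one_mul, zero_mul]
    rw [tsum_eq_single k fun m hm => if_neg (Ne.symm hm), if_pos rfl]
end

section
/- If α ∈ l⁰(ℤ) is a finitely supported mask with α_ev(z) ≠ 0 for all z on the unit circle, then there exists γ ∈ l¹(ℤ) with γ(z) = 1/α_ev(z) on the unit circle, so that the detail (Id - S_α D_γ)c vanishes on all even indices for every c ∈ l∞(ℤ). -/
/-!
Wiener's lemma is replaced by an explicit factorisation. Up to a factor `z ^ N`, the even symbol
`α_ev` is a complex polynomial; having no zeros on the unit circle, it splits into linear factors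
`z - r` with `‖r‖ ≠ 1`. Each factor is invertible in the convolution algebra `ℓ¹(ℤ)` through a
geometric series, hence so is `α_ev`, with inverse `g`; since `α_ev` is real, `γ = Re g` is still
an inverse. The symbol of a convolution is the product of the symbols, so `γ(z) = 1 / α_ev(z)`.
Finally `(S_α D_γ c)_{2k} = (α_ev ⋆ (γ ⋆ c_ev))_k`, and associativity of `ℓ¹ ⋆ ℓ¹ ⋆ ℓ^∞` turns
this into `(δ ⋆ c_ev)_k = c_{2k}`.
-/

open Polynomial Function

section Semiring

variable {R : Type*} [Semiring R]

noncomputable def coeffSeq (p : R[X]) : ℤ → R := fun k => if 0 ≤ k then p.coeff k.toNat else 0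

theorem coeffSeq_natCast (p : R[X]) (n : ℕ) : coeffSeq p n = p.coeff n := by
  simp [coeffSeq]

theorem coeffSeq_of_neg (p : R[X]) {k : ℤ} (hk : k < 0) : coeffSeq p k = 0 := by
  simp [coeffSeq, hk.not_ge]

theorem coeffSeq_C (c : R) : coeffSeq (C c) = Pi.single 0 c := by
  funext k
  rcases lt_or_ge k 0 with hk | hk
  · rw [coeffSeq_of_neg _ hk, Pi.single_eq_of_ne hk.ne]
  · lift k to ℕ using hk
    rw [coeffSeq_natCast, coeff_C]
    by_cases hk : k = 0 <;> simp [hk]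

theorem exists_coeffSeq_eq_comp_sub {A : ℤ → R} (hA : (support A).Finite) :
    ∃ (N : ℕ) (q : R[X]), coeffSeq q = fun k => A (k - N) := by
  obtain ⟨b, hb⟩ := hA.bddBelow
  set N := (-b).toNat
  have hfin : (support fun n : ℕ => A (n - N)).Finite :=
    hA.preimage (fun m _ n _ h => by simpa using h)
  refine ⟨N, ∑ n ∈ hfin.toFinset, C (A (n - N)) * X ^ n, funext fun k => ?_⟩
  rcases lt_or_ge k 0 with hk | hk
  · rw [coeffSeq_of_neg _ hk, eq_comm, ← notMem_support]
    exact fun h => absurd (hb h) (by omega)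
  · lift k to ℕ using hk
    simp only [coeffSeq_natCast, finsetSum_coeff, coeff_C_mul_X_pow, Finset.sum_ite_eq,
      ite_eq_left_iff, Set.Finite.mem_toFinset, mem_support, not_not]
    exact Eq.symm

end Semiring

section NormedRing

variable {R : Type*} [NormedRing R]

noncomputable def zconv (f g : ℤ → R) : ℤ → R := fun k => ∑' l, f (k - l) * g l

theorem zconv_single_left (a : ℤ) (c : R) (f : ℤ → R) :
    zconv (Pi.single a c) f = fun k => c * f (k - a) := by
  funext k
  rw [zconv, tsum_eq_single (k - a)]
  · simp
  · intro l hl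
    rw [Pi.single_apply, if_neg (by omega), zero_mul]

@[simp]
theorem single_zconv (f : ℤ → R) : zconv (Pi.single 0 1) f = f := by
  simp [zconv_single_left]

theorem summable_norm_single (a : ℤ) (c : R) :
    Summable fun k => ‖(Pi.single a c : ℤ → R) k‖ :=
  summable_of_ne_finset_zero (s := {a}) fun k hk => by simp_all

def HasSummableZconvInv (f : ℤ → R) : Prop :=
  ∃ g : ℤ → R, Summable (fun k => ‖g k‖) ∧ zconv f g = Pi.single 0 1

theorem hasSummableZconvInv_single (a : ℤ) (u : Rˣ) :
    HasSummableZconvInv (Pi.single a (u : R)) := by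
  refine ⟨Pi.single (-a) (↑u⁻¹ : R), ?_, ?_⟩
  · exact summable_of_ne_finset_zero (s := {-a}) fun k hk => by simp_all
  · funext k
    rw [zconv_single_left]
    by_cases hk : k = 0 <;> simp [hk, sub_eq_neg_self]

def shearEquiv : ℤ × ℤ ≃ ℤ × ℤ where
  toFun p := (p.1 + p.2, p.2)
  invFun p := (p.1 - p.2, p.2)
  left_inv p := by simp
  right_inv p := by simp

theorem summable_norm_zconv_prod {f g : ℤ → R} (hf : Summable fun k => ‖f k‖)
    (hg : Summable fun k => ‖g k‖) :
    Summable fun p : ℤ × ℤ => ‖f (p.1 - p.2)‖ * ‖g p.2‖ := by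
  rw [← shearEquiv.summable_iff]
  simpa [shearEquiv, Function.comp_def] using
    hf.mul_of_nonneg hg (fun _ => norm_nonneg _) (fun _ => norm_nonneg _)

theorem summable_norm_zconv {f g : ℤ → R} (hf : Summable fun k => ‖f k‖)
    (hg : Summable fun k => ‖g k‖) : Summable fun k => ‖zconv f g k‖ := by
  have hfg := summable_norm_zconv_prod hf hg
  exact hfg.prod.of_nonneg_of_le (fun _ => norm_nonneg _) fun k =>
    tsum_of_norm_bounded (hfg.prod_factor k).hasSum fun _ => norm_mul_le _ _

theorem summable_norm_coeffSeq (p : R[X]) : Summable fun k => ‖coeffSeq p k‖ := by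
  refine summable_of_ne_finset_zero (s := (Finset.range (p.natDegree + 1)).map Nat.castEmbedding)
    fun k hk => ?_
  rcases lt_or_ge k 0 with hk' | hk'
  · simp [coeffSeq_of_neg _ hk']
  · lift k to ℕ using hk'
    simp only [Finset.mem_map, Finset.mem_range, Nat.castEmbedding_apply, Nat.cast_inj,
      exists_eq_right, not_lt] at hk
    simp [coeffSeq_natCast, coeff_eq_zero_of_natDegree_lt hk]

theorem coeffSeq_mul (p q : R[X]) : coeffSeq (p * q) = zconv (coeffSeq p) (coeffSeq q) := by
  have hvanish : ∀ k l : ℤ, l < 0 ∨ k < l → coeffSeq p (k - l) * coeffSeq q l = 0 := by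
    rintro k l (hl | hl)
    · rw [coeffSeq_of_neg q hl, mul_zero]
    · rw [coeffSeq_of_neg p (by omega), zero_mul]
  funext k
  rcases lt_or_ge k 0 with hk | hk
  · rw [coeffSeq_of_neg _ hk, zconv, eq_comm, ← tsum_zero]
    exact tsum_congr fun l => hvanish k l (by omega)
  · lift k to ℕ using hk
    rw [coeffSeq_natCast, coeff_mul, ← Finset.Nat.sum_antidiagonal_swap]
    simp only [Prod.fst_swap, Prod.snd_swap]
    rw [Finset.Nat.sum_antidiagonal_eq_sum_range_succ fun i j => p.coeff j * q.coeff i, zconv,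
      tsum_eq_sum (s := (Finset.range (k + 1)).map Nat.castEmbedding), Finset.sum_map]
    · refine Finset.sum_congr rfl fun i hi => ?_
      rw [Finset.mem_range] at hi
      rw [Nat.castEmbedding_apply, ← Nat.cast_sub (by omega), coeffSeq_natCast, coeffSeq_natCast]
    · intro l hl
      refine hvanish k l ?_
      by_contra! h
      lift l to ℕ using h.1
      exact hl (Finset.mem_map_of_mem _ (Finset.mem_range.mpr (by omega)))

theorem zconv_coeffSeq_X_sub_C (r : R) (g : ℤ → R) :
    zconv (coeffSeq (X - C r)) g = fun k => g (k - 1) - r * g k := by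
  funext k
  rw [zconv, tsum_eq_sum (s := {k - 1, k}), Finset.sum_pair (by omega)]
  · simp [coeffSeq, sub_eq_add_neg]
  · intro l hl
    rw [Finset.mem_insert, Finset.mem_singleton, not_or] at hl
    rcases lt_or_ge (k - l) 0 with h | h
    · rw [coeffSeq_of_neg _ h, zero_mul]
    · have h1 : 1 ≠ (k - l).toNat := by omega
      have h0 : (k - l).toNat ≠ 0 := by omega
      simp [coeffSeq, coeff_X, coeff_C, h1, h0]

variable [CompleteSpace R]

theorem summable_zconv_apply {f g : ℤ → R} (hf : Summable fun k => ‖f k‖) {C : ℝ}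
    (hg : ∀ k, ‖g k‖ ≤ C) (k : ℤ) : Summable fun l => f (k - l) * g l := by
  refine .of_norm_bounded (((Equiv.subLeft k).summable_iff.mpr hf).mul_right C) fun l => ?_
  calc ‖f (k - l) * g l‖ ≤ ‖f (k - l)‖ * ‖g l‖ := norm_mul_le _ _
    _ ≤ ‖f (k - l)‖ * C := by gcongr; exact hg l

theorem zconv_assoc {f g h : ℤ → R} (hf : Summable fun k => ‖f k‖)
    (hg : Summable fun k => ‖g k‖) {C : ℝ} (hh : ∀ k, ‖h k‖ ≤ C) :
    zconv (zconv f g) h = zconv f (zconv g h) := by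
  funext k
  set F : ℤ × ℤ → R := fun p => f (k - p.1 - p.2) * g p.2 * h p.1
  set G : ℤ × ℤ → R := fun p => f (k - p.1) * (g (p.1 - p.2) * h p.2)
  set e : ℤ × ℤ ≃ ℤ × ℤ := (Equiv.prodComm ℤ ℤ).trans shearEquiv
  have hGe : ∀ p, G (e p) = F p := by
    rintro ⟨l, j⟩
    simp only [G, F, e, shearEquiv, Equiv.trans_apply, Equiv.prodComm_apply, Prod.swap,
      Equiv.coe_fn_mk]
    rw [add_sub_cancel_right, ← mul_assoc, show k - (j + l) = k - l - j by ring]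
  have hF : Summable F := by
    have hfg := (summable_norm_zconv_prod hf hg).comp_injective
      (Equiv.prodCongr (Equiv.subLeft k) (Equiv.refl ℤ)).injective
    refine .of_norm_bounded (hfg.mul_right C) fun p => ?_
    simp only [F, comp_apply, Equiv.prodCongr_apply, Prod.map, Equiv.subLeft_apply,
      Equiv.refl_apply]
    calc ‖f (k - p.1 - p.2) * g p.2 * h p.1‖
        ≤ ‖f (k - p.1 - p.2)‖ * ‖g p.2‖ * ‖h p.1‖ := norm_mul₃_le
      _ ≤ ‖f (k - p.1 - p.2)‖ * ‖g p.2‖ * C := by gcongr; exact hh _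
  have hG : Summable G := e.summable_iff.mp (hF.congr fun p => (hGe p).symm)
  have hg_bdd : ∀ j, ‖g j‖ ≤ ∑' i, ‖g i‖ := fun j =>
    hg.le_tsum j fun _ _ => norm_nonneg _
  calc zconv (zconv f g) h k = ∑' l, ∑' m, F (l, m) :=
        tsum_congr fun l => ((summable_zconv_apply hf hg_bdd (k - l)).tsum_mul_right _).symm
    _ = ∑' p, G p := by
      rw [← hF.tsum_prod, ← e.tsum_eq G]
      exact tsum_congr fun p => (hGe p).symm
    _ = zconv f (zconv g h) k := by
      rw [hG.tsum_prod]
      exact tsum_congr fun m => (summable_zconv_apply hg hh m).tsum_mul_left (f (k - m))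

theorem HasSummableZconvInv.zconv {f g : ℤ → R} (hf' : HasSummableZconvInv f)
    (hg' : HasSummableZconvInv g) (hf : Summable fun k => ‖f k‖)
    (hg : Summable fun k => ‖g k‖) : HasSummableZconvInv (zconv f g) := by
  obtain ⟨f', hf's, hff'⟩ := hf'
  obtain ⟨g', hg's, hgg'⟩ := hg'
  have hg'f's := summable_norm_zconv hg's hf's
  refine ⟨_root_.zconv g' f', hg'f's, ?_⟩
  rw [zconv_assoc hf hg fun k => hg'f's.le_tsum k fun _ _ => norm_nonneg _,
    ← zconv_assoc hg hg's fun k => hf's.le_tsum k fun _ _ => norm_nonneg _, hgg', single_zconv,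
    hff']

end NormedRing

section NormedField

variable {𝕜 : Type*} [NormedField 𝕜]

theorem hasSummableZconvInv_X_sub_C_of_norm_lt_one {r : 𝕜} (hr : ‖r‖ < 1) :
    HasSummableZconvInv (coeffSeq (X - C r)) := by
  simp only [HasSummableZconvInv, zconv_coeffSeq_X_sub_C]
  -- `1 / (z - r) = ∑_{n ≥ 0} r ^ n z ^ (-n-1)`
  refine ⟨fun k => if k < 0 then r ^ (-k - 1).toNat else 0, ?_, ?_⟩
  · refine .of_nat_of_neg_add_one (summable_zero.congr fun n => ?_)
      ((summable_geometric_of_lt_one (norm_nonneg r) hr).congr fun n => ?_)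
    · dsimp only
      rw [if_neg (by omega), norm_zero]
    · dsimp only
      rw [if_pos (by omega), show -(-((n : ℤ) + 1)) - 1 = n by ring, Int.toNat_natCast,
        norm_pow]
  · funext k
    dsimp only
    rcases lt_trichotomy k 0 with hk | rfl | hk
    · rw [if_pos (by omega), if_pos hk, Pi.single_eq_of_ne hk.ne,
        show (-(k - 1) - 1).toNat = (-k - 1).toNat + 1 by omega, pow_succ', sub_self]
    · simp
    · rw [if_neg (by omega), if_neg (by omega), Pi.single_eq_of_ne hk.ne', mul_zero, sub_zero]

theorem hasSummableZconvInv_X_sub_C_of_one_lt_norm {r : 𝕜} (hr : 1 < ‖r‖) :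
    HasSummableZconvInv (coeffSeq (X - C r)) := by
  simp only [HasSummableZconvInv, zconv_coeffSeq_X_sub_C]
  -- `1 / (z - r) = -∑_{n ≥ 0} r ^ (-n-1) z ^ n`
  have hr0 : r ≠ 0 := norm_pos_iff.mp (one_pos.trans hr)
  have hr' : ‖r⁻¹‖ < 1 := by rw [norm_inv]; exact inv_lt_one_of_one_lt₀ hr
  refine ⟨fun k => if 0 ≤ k then -r⁻¹ ^ (k.toNat + 1) else 0, ?_, ?_⟩
  · refine .of_nat_of_neg_add_one
      (((summable_geometric_of_lt_one (norm_nonneg _) hr').mul_left ‖r⁻¹‖).congr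
        fun n => ?_)
      (summable_zero.congr fun n => ?_)
    · dsimp only
      rw [if_pos (by omega), Int.toNat_natCast, norm_neg, norm_pow, pow_succ']
    · dsimp only
      rw [if_neg (by omega), norm_zero]
  · funext k
    dsimp only
    rcases lt_trichotomy k 0 with hk | rfl | hk
    · rw [if_neg (by omega), if_neg (by omega), Pi.single_eq_of_ne hk.ne, mul_zero, sub_zero]
    · simp [hr0]
    · rw [if_pos (by omega), if_pos hk.le, Pi.single_eq_of_ne hk.ne',
        show k.toNat = (k - 1).toNat + 1 by omega, pow_succ' r⁻¹ ((k - 1).toNat + 1),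
        mul_neg, ← mul_assoc, mul_inv_cancel₀ hr0, one_mul, sub_neg_eq_add, neg_add_cancel]

theorem hasSummableZconvInv_X_sub_C {r : 𝕜} (hr : ‖r‖ ≠ 1) :
    HasSummableZconvInv (coeffSeq (X - C r)) :=
  hr.lt_or_gt.elim hasSummableZconvInv_X_sub_C_of_norm_lt_one
    hasSummableZconvInv_X_sub_C_of_one_lt_norm

theorem eval_eq_tsum_coeffSeq (p : 𝕜[X]) (z : 𝕜) :
    p.eval z = ∑' k : ℤ, coeffSeq p k * z ^ k := by
  rw [eval_eq_sum_range, tsum_eq_sum (s := (Finset.range (p.natDegree + 1)).map Nat.castEmbedding),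
    Finset.sum_map]
  · simp [coeffSeq_natCast]
  · intro k hk
    rcases lt_or_ge k 0 with hk' | hk'
    · rw [coeffSeq_of_neg _ hk', zero_mul]
    · lift k to ℕ using hk'
      rw [coeffSeq_natCast, coeff_eq_zero_of_natDegree_lt, zero_mul]
      by_contra! h
      exact hk (Finset.mem_map_of_mem _ (Finset.mem_range.mpr (by omega)))

variable [CompleteSpace 𝕜]

theorem hasSummableZconvInv_coeffSeq [IsAlgClosed 𝕜] (p : 𝕜[X])
    (hp : ∀ z : 𝕜, ‖z‖ = 1 → p.eval z ≠ 0) : HasSummableZconvInv (coeffSeq p) := by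
  induction hn : p.natDegree generalizing p with
  | zero =>
    have hp1 := hp 1 norm_one
    rw [eq_C_of_natDegree_eq_zero hn, eval_C] at hp1
    rw [eq_C_of_natDegree_eq_zero hn, coeffSeq_C]
    exact hasSummableZconvInv_single 0 (Units.mk0 _ hp1)
  | succ n ih =>
    obtain ⟨r, hr⟩ := IsAlgClosed.exists_root p fun h => by
      simp [natDegree_eq_of_degree_eq_some h] at hn
    set q := p /ₘ (X - C r)
    have hpq : p = (X - C r) * q := (mul_divByMonic_eq_iff_isRoot.mpr hr).symm
    have hq : ∀ z : 𝕜, ‖z‖ = 1 → q.eval z ≠ 0 := fun z hz h =>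
      hp z hz (by rw [hpq, eval_mul, h, mul_zero])
    have hqn : q.natDegree = n := by
      rw [natDegree_divByMonic _ (monic_X_sub_C r), hn, natDegree_X_sub_C, Nat.add_sub_cancel]
    rw [hpq, coeffSeq_mul]
    exact (hasSummableZconvInv_X_sub_C fun h => hp r h hr).zconv (ih q hq hqn)
      (summable_norm_coeffSeq _) (summable_norm_coeffSeq _)

theorem hasSummableZconvInv_of_finite_support [IsAlgClosed 𝕜] {A : ℤ → 𝕜}
    (hA : (support A).Finite) (hne : ∀ z : 𝕜, ‖z‖ = 1 → ∑' k, A k * z ^ k ≠ 0) :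
    HasSummableZconvInv A := by
  obtain ⟨N, q, hq⟩ := exists_coeffSeq_eq_comp_sub hA
  have hAq : A = zconv (Pi.single (-N) ((1 : 𝕜ˣ) : 𝕜)) (coeffSeq q) := by
    rw [zconv_single_left, hq]
    simp
  have heval : ∀ z : 𝕜, z ≠ 0 → q.eval z = z ^ N * ∑' k, A k * z ^ k := by
    intro z hz
    rw [eval_eq_tsum_coeffSeq, hq, ← (Equiv.addRight (N : ℤ)).tsum_eq, ← tsum_mul_left]
    refine tsum_congr fun k => ?_
    simp only [Equiv.coe_addRight, add_sub_cancel_right, zpow_add₀ hz, zpow_natCast]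
    ring
  rw [hAq]
  refine (hasSummableZconvInv_single _ 1).zconv
    (hasSummableZconvInv_coeffSeq q fun z hz => ?_) (summable_norm_single _ _)
    (summable_norm_coeffSeq q)
  rw [heval z (norm_ne_zero_iff.mp (hz ▸ one_ne_zero))]
  exact mul_ne_zero (pow_ne_zero _ (norm_ne_zero_iff.mp (hz ▸ one_ne_zero))) (hne z hz)

theorem tsum_zconv_mul_zpow {f g : ℤ → 𝕜} (hf : Summable fun k => ‖f k‖)
    (hg : Summable fun k => ‖g k‖) {z : 𝕜} (hz : ‖z‖ = 1) :
    ∑' k, zconv f g k * z ^ k = (∑' k, f k * z ^ k) * ∑' k, g k * z ^ k := by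
  have hz0 : z ≠ 0 := norm_ne_zero_iff.mp (hz ▸ one_ne_zero)
  set F : ℤ × ℤ → 𝕜 := fun p => f (p.1 - p.2) * g p.2 * z ^ p.1
  have hF : Summable F :=
    .of_norm_bounded (summable_norm_zconv_prod hf hg) fun p => by simp [F, norm_zpow, hz]
  calc ∑' k, zconv f g k * z ^ k = ∑' p, F p := by
        rw [hF.tsum_prod]
        exact tsum_congr fun k => tsum_mul_right.symm
    _ = ∑' p : ℤ × ℤ, f p.1 * z ^ p.1 * (g p.2 * z ^ p.2) := by
        rw [← shearEquiv.tsum_eq]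
        refine tsum_congr fun p => ?_
        simp only [F, shearEquiv, Equiv.coe_fn_mk, add_sub_cancel_right, zpow_add₀ hz0]
        ring
    _ = _ := (tsum_mul_tsum_of_summable_norm (f := fun k => f k * z ^ k)
        (g := fun k => g k * z ^ k) (by simpa [norm_zpow, hz] using hf)
        (by simpa [norm_zpow, hz] using hg)).symm

theorem tsum_mul_zpow_eq_one_div {f g : ℤ → 𝕜} (hf : Summable fun k => ‖f k‖)
    (hg : Summable fun k => ‖g k‖) (hfg : zconv f g = Pi.single 0 1) {z : 𝕜}
    (hz : ‖z‖ = 1) :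
    ∑' k, g k * z ^ k = 1 / ∑' k, f k * z ^ k := by
  refine eq_one_div_of_mul_eq_one_right ?_
  rw [← tsum_zconv_mul_zpow hf hg hz, hfg, tsum_eq_single 0 fun k hk => by simp [hk]]
  simp

end NormedField

theorem ofReal_zconv (a b : ℤ → ℝ) :
    zconv (fun k => (a k : ℂ)) (fun k => (b k : ℂ)) = fun k => ((zconv a b k : ℝ) : ℂ) := by
  funext k
  simp [zconv, Complex.ofReal_tsum]

theorem zconv_re_eq_single {a : ℤ → ℝ} {g : ℤ → ℂ} (ha : Summable fun k => ‖a k‖)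
    (hg : Summable fun k => ‖g k‖) (hag : zconv (fun k => (a k : ℂ)) g = Pi.single 0 1) :
    zconv a (fun k => (g k).re) = Pi.single 0 1 := by
  funext k
  have hterms : Summable fun l => (a (k - l) : ℂ) * g l :=
    summable_zconv_apply (f := fun k => (a k : ℂ)) (by simpa using ha)
      (fun l => hg.le_tsum l fun _ _ => norm_nonneg _) k
  have hk := congrArg Complex.re (congrFun hag k)
  simp only [zconv, Complex.re_tsum hterms, Complex.re_ofReal_mul] at hk
  rw [zconv, hk]
  by_cases hk0 : k = 0 <;> simp [hk0]

theorem subdOp_decimOp_two_mul {α γ c : ℤ → ℝ} (hα : Summable fun k => ‖α (2 * k)‖)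
    (hγ : Summable fun k => ‖γ k‖) {M : ℝ} (hc : ∀ k, |c k| ≤ M)
    (hαγ : zconv (fun k => α (2 * k)) γ = Pi.single 0 1) (k : ℤ) :
    subdOp α (decimOp γ c) (2 * k) = c (2 * k) := by
  have hsubd : subdOp α (decimOp γ c) (2 * k) = zconv (fun k => α (2 * k)) (decimOp γ c) k := by
    simp only [subdOp, zconv, mul_sub]
  have hdecim : decimOp γ c = zconv γ fun m => c (2 * m) := rfl
  rw [hsubd, hdecim, ← zconv_assoc hα hγ fun m => hc (2 * m), hαγ, single_zconv]

/-- If `α` is finitely supported and its even-part symbol has no zeros on the unit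
circle, then there is `γ ∈ l¹(ℤ)` with `γ(z) = 1/α_ev(z)` on the unit circle, and the
detail `(Id - S_α D_γ) c` vanishes at all even indices for every bounded `c`. -/
theorem even_reversible_exists (α : ℤ → ℝ)
    (hfin : (Function.support α).Finite)
    (hne : ∀ z : ℂ, ‖z‖ = 1 → (∑' k : ℤ, (α (2 * k) : ℂ) * z ^ k) ≠ 0) :
    ∃ γ : ℤ → ℝ, Summable (fun k : ℤ => |γ k|) ∧
      (∀ z : ℂ, ‖z‖ = 1 →
        (∑' k : ℤ, (γ k : ℂ) * z ^ k) = 1 / (∑' k : ℤ, (α (2 * k) : ℂ) * z ^ k)) ∧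
      (∀ c : ℤ → ℝ, (∃ M : ℝ, ∀ k : ℤ, |c k| ≤ M) →
        ∀ k : ℤ, c (2 * k) - subdOp α (decimOp γ c) (2 * k) = 0) := by
  have hev : (support fun k => α (2 * k)).Finite :=
    hfin.preimage (mul_right_injective₀ two_ne_zero).injOn
  have hα : Summable fun k => ‖α (2 * k)‖ :=
    summable_of_hasFiniteSupport (show Set.Finite _ from hev.subset fun k hk => by simpa using hk)
  obtain ⟨g, hg, hαg⟩ :=
    hasSummableZconvInv_of_finite_support (A := fun k => (α (2 * k) : ℂ))
      (hev.subset fun k hk => by simpa using hk) hne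
  set γ : ℤ → ℝ := fun k => (g k).re
  have hγ : Summable fun k => ‖γ k‖ :=
    hg.of_nonneg_of_le (fun _ => norm_nonneg _) fun k => Complex.abs_re_le_norm (g k)
  have hαγ : zconv (fun k => α (2 * k)) γ = Pi.single 0 1 := zconv_re_eq_single hα hg hαg
  have hαγℂ : zconv (fun k => (α (2 * k) : ℂ)) (fun k => (γ k : ℂ)) = Pi.single 0 1 := by
    rw [ofReal_zconv, hαγ]
    funext k
    by_cases hk : k = 0 <;> simp [hk]
  refine ⟨γ, by simpa using hγ, fun z hz => ?_, fun c ⟨M, hM⟩ k => ?_⟩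
  · exact tsum_mul_zpow_eq_one_div (by simpa using hα) (by simpa using hγ) hαγℂ hz
  · rw [subdOp_decimOp_two_mul hα hγ hM hαγ, sub_self]
end

section
/- The sequences a_k = ∑_{n=0}^∞ C(2(n+k), n) 6^{-2(n+k)} and b_k = ∑_{n=0}^∞ C(2(n+k)+1, n) 6^{-2(n+k)-1}, k ≥ 0, satisfy the recurrences a_{k+1} = 6 b_k - a_k and b_k = 6 a_k - b_{k-1}. -/
/-- `a_k = ∑_{n=0}^∞ C(2(n+k), n) 6^{-2(n+k)}`. -/
noncomputable def seqA (k : ℕ) : ℝ :=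
  ∑' n : ℕ, (Nat.choose (2 * (n + k)) n : ℝ) / 6 ^ (2 * (n + k))

/-- `b_k = ∑_{n=0}^∞ C(2(n+k)+1, n) 6^{-2(n+k)-1}`. -/
noncomputable def seqB (k : ℕ) : ℝ :=
  ∑' n : ℕ, (Nat.choose (2 * (n + k) + 1) n : ℝ) / 6 ^ (2 * (n + k) + 1)

/-!
Both sequences are values of `S(j) = ∑ₙ C(2n+j, n) x^{-(2n+j)}` at `x = 6`: `a_k = S(2k)` and
`b_k = S(2k+1)`. So both recurrences are the one identity `S(j+2) + S(j) = x S(j+1)`. To see it,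
write `x S(j+1) = ∑ₙ C(2n+j+1, n) x^{-(2n+j)}`, split off the term `n = 0`, and apply Pascal's
rule `C(2n+j+3, n+1) = C(2n+j+2, n) + C(2n+j+2, n+1)` to the others.
-/

section

variable {𝕜 : Type*} [NormedField 𝕜]

noncomputable def diagBinomTerm (x : 𝕜) (j n : ℕ) : 𝕜 :=
  (Nat.choose (2 * n + j) n : 𝕜) / x ^ (2 * n + j)

lemma norm_diagBinomTerm_le (x : 𝕜) (j n : ℕ) :
    ‖diagBinomTerm x j n‖ ≤ (2 / ‖x‖) ^ j * ((2 / ‖x‖) ^ 2) ^ n := by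
  have hchoose : ‖(Nat.choose (2 * n + j) n : 𝕜)‖ ≤ 2 ^ (2 * n + j) := by
    calc ‖(Nat.choose (2 * n + j) n : 𝕜)‖ ≤ Nat.choose (2 * n + j) n := by
          simpa using Nat.norm_cast_le (α := 𝕜) (Nat.choose (2 * n + j) n)
      _ ≤ 2 ^ (2 * n + j) := by exact_mod_cast Nat.choose_le_two_pow _ _
  calc ‖diagBinomTerm x j n‖ ≤ 2 ^ (2 * n + j) / ‖x‖ ^ (2 * n + j) := by
        rw [diagBinomTerm, norm_div, norm_pow]
        gcongr
    _ = (2 / ‖x‖) ^ j * ((2 / ‖x‖) ^ 2) ^ n := by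
        rw [← div_pow, ← pow_mul, ← pow_add, add_comm, mul_comm]

lemma summable_diagBinomTerm [CompleteSpace 𝕜] {x : 𝕜} (hx : 2 < ‖x‖) (j : ℕ) :
    Summable (diagBinomTerm x j) := by
  have hr : (2 / ‖x‖) ^ 2 < 1 := by
    rw [sq_lt_one_iff₀ (by positivity)]
    exact (div_lt_one (by linarith)).2 hx
  exact Summable.of_norm_bounded
    ((summable_geometric_of_lt_one (by positivity) hr).mul_left _) (norm_diagBinomTerm_le x j)

lemma mul_diagBinomTerm_succ {x : 𝕜} (hx : x ≠ 0) (j n : ℕ) :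
    x * diagBinomTerm x (j + 1) n = (Nat.choose (2 * n + j + 1) n : 𝕜) / x ^ (2 * n + j) := by
  rw [diagBinomTerm, ← add_assoc, pow_succ]
  field_simp

lemma mul_diagBinomTerm_succ_succ {x : 𝕜} (hx : x ≠ 0) (j n : ℕ) :
    x * diagBinomTerm x (j + 1) (n + 1) =
      diagBinomTerm x (j + 2) n + diagBinomTerm x j (n + 1) := by
  have hpascal : Nat.choose (2 * (n + 1) + j + 1) (n + 1) =
      Nat.choose (2 * n + (j + 2)) n + Nat.choose (2 * (n + 1) + j) (n + 1) := by
    rw [show 2 * (n + 1) + j + 1 = (2 * n + (j + 2)) + 1 by ring, Nat.choose_succ_succ,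
      show 2 * n + (j + 2) = 2 * (n + 1) + j by ring]
  rw [mul_diagBinomTerm_succ hx, hpascal, Nat.cast_add, add_div, diagBinomTerm, diagBinomTerm,
    show 2 * n + (j + 2) = 2 * (n + 1) + j by ring]

noncomputable def diagBinomSeries (x : 𝕜) (j : ℕ) : 𝕜 :=
  ∑' n, diagBinomTerm x j n

theorem diagBinomSeries_add_add [CompleteSpace 𝕜] {x : 𝕜} (hx : 2 < ‖x‖) (j : ℕ) :
    diagBinomSeries x (j + 2) + diagBinomSeries x j = x * diagBinomSeries x (j + 1) := by
  have hx0 : x ≠ 0 := norm_pos_iff.1 (by linarith)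
  have hsum : ∀ i, Summable (diagBinomTerm x i) := summable_diagBinomTerm hx
  have hhead : x * diagBinomTerm x (j + 1) 0 = diagBinomTerm x j 0 := by
    rw [mul_diagBinomTerm_succ hx0, diagBinomTerm]
    simp
  calc diagBinomSeries x (j + 2) + diagBinomSeries x j
      = diagBinomTerm x j 0 +
          ∑' n, (diagBinomTerm x (j + 2) n + diagBinomTerm x j (n + 1)) := by
        rw [diagBinomSeries, diagBinomSeries, (hsum j).tsum_eq_zero_add,
          (hsum (j + 2)).tsum_add ((summable_nat_add_iff 1).2 (hsum j))]
        ring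
    _ = ∑' n, x * diagBinomTerm x (j + 1) n := by
        rw [((hsum (j + 1)).mul_left x).tsum_eq_zero_add, hhead]
        simp only [mul_diagBinomTerm_succ_succ hx0]
    _ = x * diagBinomSeries x (j + 1) := tsum_mul_left

end

theorem seqA_eq_diagBinomSeries (k : ℕ) : seqA k = diagBinomSeries (6 : ℝ) (2 * k) := by
  simp only [seqA, diagBinomSeries, diagBinomTerm, mul_add]

theorem seqB_eq_diagBinomSeries (k : ℕ) : seqB k = diagBinomSeries (6 : ℝ) (2 * k + 1) := by
  simp only [seqB, diagBinomSeries, diagBinomTerm, mul_add, add_assoc]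

/-- The recurrences `a_{k+1} = 6 b_k - a_k` and `b_k = 6 a_k - b_{k-1}`. -/
theorem seqA_seqB_recurrence :
    (∀ k : ℕ, seqA (k + 1) = 6 * seqB k - seqA k) ∧
    (∀ k : ℕ, seqB (k + 1) = 6 * seqA (k + 1) - seqB k) := by
  have hrec := diagBinomSeries_add_add (x := (6 : ℝ)) (by norm_num)
  refine ⟨fun k => ?_, fun k => ?_⟩
  · have := hrec (2 * k)
    simp only [seqA_eq_diagBinomSeries, seqB_eq_diagBinomSeries, mul_add] at this ⊢
    linarith
  · have := hrec (2 * k + 1)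
    simp only [seqA_eq_diagBinomSeries, seqB_eq_diagBinomSeries, mul_add] at this ⊢
    linarith
end

section
/- For all integers k ≥ 0, ∑_{n=0}^∞ C(2(n+k), n) 6^{-2(n+k)} = (3√2/4)(3-2√2)^{2k} and ∑_{n=0}^∞ C(2(n+k)+1, n) 6^{-2(n+k)-1} = (3√2/4)(3-2√2)^{2k+1}. -/
/-!
Write `T x j = ∑ₙ C(2n+j, n) x^(2n+j)`. Pascal's rule gives `T x (j+1) = x (T x j + T x (j+2))`,
a linear recurrence whose characteristic roots are `r` and `1/r` when `x = r / (1 + r²)`.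
For `0 < r < 1` the sequence `j ↦ T x j` is bounded, so the component along the growing root
`1/r` vanishes and `T x j = r^j T x 0`. The relation `C(2n+2, n+1) = 2 C(2n+1, n)` gives
`T x 0 = 1 + 2x T x 1`, which pins down `T x 0 = (1 + r²)/(1 - r²)`.
At `x = 1/6` we have `r = 3 - 2√2`.
-/

open Real

theorem sub_mul_eq_pow_mul_of_linearRec {R : Type*} [CommRing R] {u : ℕ → R} {r s : R}
    (hrec : ∀ j, u (j + 2) = (r + s) * u (j + 1) - r * s * u j) (j : ℕ) :
    u (j + 1) - r * u j = s ^ j * (u 1 - r * u 0) := by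
  induction j with
  | zero => simp
  | succ j ih => rw [hrec, pow_succ', mul_assoc s, ← ih]; ring

theorem eq_zero_of_abs_mul_pow_le {c s M : ℝ} (hs : 1 < |s|) (h : ∀ j : ℕ, |c * s ^ j| ≤ M) :
    c = 0 := by
  by_contra hc
  obtain ⟨j, hj⟩ := pow_unbounded_of_one_lt (M / |c|) hs
  rw [div_lt_iff₀ (abs_pos.2 hc)] at hj
  have := h j
  rw [abs_mul, abs_pow] at this
  linarith

theorem eq_pow_mul_of_bounded_of_linearRec {u : ℕ → ℝ} {r s M : ℝ} (hs : 1 < |s|)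
    (hu : ∀ j, |u j| ≤ M) (hrec : ∀ j, u (j + 2) = (r + s) * u (j + 1) - r * s * u j) (j : ℕ) :
    u j = r ^ j * u 0 := by
  have hstep : ∀ j, u (j + 1) = r * u j := by
    have hzero : u 1 - r * u 0 = 0 := by
      refine eq_zero_of_abs_mul_pow_le (M := M + |r| * M) hs fun j => ?_
      rw [mul_comm, ← sub_mul_eq_pow_mul_of_linearRec hrec]
      calc |u (j + 1) - r * u j| ≤ |u (j + 1)| + |r| * |u j| := by
            rw [← abs_mul]; exact abs_sub _ _
        _ ≤ M + |r| * M := by gcongr <;> exact hu _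
    intro j
    have := sub_mul_eq_pow_mul_of_linearRec hrec j
    rw [hzero, mul_zero] at this
    exact sub_eq_zero.1 this
  induction j with
  | zero => simp
  | succ j ih => rw [hstep, ih, pow_succ]; ring

noncomputable def shiftedCentralBinomTerm (x : ℝ) (j n : ℕ) : ℝ :=
  ((2 * n + j).choose n : ℝ) * x ^ (2 * n + j)

noncomputable def shiftedCentralBinomSum (x : ℝ) (j : ℕ) : ℝ :=
  ∑' n, shiftedCentralBinomTerm x j n

section

variable {x : ℝ}

theorem shiftedCentralBinomTerm_nonneg (hx : 0 ≤ x) (j n : ℕ) :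
    0 ≤ shiftedCentralBinomTerm x j n := by
  unfold shiftedCentralBinomTerm; positivity

theorem shiftedCentralBinomTerm_le (hx : 0 ≤ x) (h2x : 2 * x ≤ 1) (j n : ℕ) :
    shiftedCentralBinomTerm x j n ≤ ((2 * x) ^ 2) ^ n :=
  calc shiftedCentralBinomTerm x j n ≤ 2 ^ (2 * n + j) * x ^ (2 * n + j) := by
        unfold shiftedCentralBinomTerm; gcongr; exact_mod_cast Nat.choose_le_two_pow _ _
    _ = ((2 * x) ^ 2) ^ n * (2 * x) ^ j := by rw [← mul_pow, pow_add, pow_mul]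
    _ ≤ ((2 * x) ^ 2) ^ n :=
      mul_le_of_le_one_right (by positivity) (pow_le_one₀ (by positivity) h2x)

theorem summable_shiftedCentralBinomTerm (hx : 0 ≤ x) (h2x : 2 * x < 1) (j : ℕ) :
    Summable (shiftedCentralBinomTerm x j) :=
  .of_nonneg_of_le (shiftedCentralBinomTerm_nonneg hx j) (shiftedCentralBinomTerm_le hx h2x.le j)
    (summable_geometric_of_lt_one (by positivity) (by nlinarith))

theorem abs_shiftedCentralBinomSum_le (hx : 0 ≤ x) (h2x : 2 * x < 1) (j : ℕ) :
    |shiftedCentralBinomSum x j| ≤ (1 - (2 * x) ^ 2)⁻¹ := by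
  unfold shiftedCentralBinomSum
  rw [abs_of_nonneg (tsum_nonneg (shiftedCentralBinomTerm_nonneg hx j)),
    ← tsum_geometric_of_lt_one (by positivity) (by nlinarith)]
  exact (summable_shiftedCentralBinomTerm hx h2x j).tsum_le_tsum
    (shiftedCentralBinomTerm_le hx h2x.le j)
    (summable_geometric_of_lt_one (by positivity) (by nlinarith))

theorem shiftedCentralBinomSum_succ (hx : 0 ≤ x) (h2x : 2 * x < 1) (j : ℕ) :
    shiftedCentralBinomSum x (j + 1) =
      x * (shiftedCentralBinomSum x j + shiftedCentralBinomSum x (j + 2)) := by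
  have pascal : ∀ m, shiftedCentralBinomTerm x (j + 1) (m + 1) =
      x * shiftedCentralBinomTerm x (j + 2) m + x * shiftedCentralBinomTerm x j (m + 1) := by
    intro m
    unfold shiftedCentralBinomTerm
    rw [show 2 * (m + 1) + (j + 1) = (2 * m + j + 2) + 1 by ring, Nat.choose_succ_succ',
      show 2 * m + (j + 2) = 2 * m + j + 2 by ring, show 2 * (m + 1) + j = 2 * m + j + 2 by ring]
    push_cast
    ring
  have hs := summable_shiftedCentralBinomTerm hx h2x
  unfold shiftedCentralBinomSum
  rw [(hs (j + 1)).tsum_eq_zero_add, (hs j).tsum_eq_zero_add, tsum_congr pascal,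
    (hs (j + 2)).mul_left x |>.tsum_add ((summable_nat_add_iff 1).2 (hs j) |>.mul_left x),
    tsum_mul_left, tsum_mul_left]
  simp only [shiftedCentralBinomTerm, Nat.choose_zero_right]
  ring

theorem shiftedCentralBinomSum_zero (hx : 0 ≤ x) (h2x : 2 * x < 1) :
    shiftedCentralBinomSum x 0 = 1 + 2 * x * shiftedCentralBinomSum x 1 := by
  have hterm : ∀ n, shiftedCentralBinomTerm x 0 (n + 1) =
      2 * x * shiftedCentralBinomTerm x 1 n := by
    intro n
    unfold shiftedCentralBinomTerm
    rw [show 2 * (n + 1) + 0 = (2 * n + 1) + 1 by ring, Nat.choose_succ_succ',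
      Nat.choose_symm_half]
    push_cast
    ring
  unfold shiftedCentralBinomSum
  rw [(summable_shiftedCentralBinomTerm hx h2x 0).tsum_eq_zero_add, tsum_congr hterm, tsum_mul_left]
  simp [shiftedCentralBinomTerm]

end

theorem shiftedCentralBinomSum_eq {r : ℝ} (hr0 : 0 < r) (hr1 : r < 1) (j : ℕ) :
    shiftedCentralBinomSum (r / (1 + r ^ 2)) j = (1 + r ^ 2) / (1 - r ^ 2) * r ^ j := by
  set x := r / (1 + r ^ 2) with hx_def
  have hx : 0 < x := by positivity
  have h2x : 2 * x < 1 := by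
    rw [hx_def, mul_div_assoc', div_lt_one (by positivity)]
    nlinarith [sq_pos_of_pos (sub_pos.2 hr1)]
  have hroots : r + r⁻¹ = x⁻¹ := by rw [hx_def]; field_simp; ring
  have hgeom : ∀ j, shiftedCentralBinomSum x j = r ^ j * shiftedCentralBinomSum x 0 := by
    refine eq_pow_mul_of_bounded_of_linearRec (s := r⁻¹) ?_
      (abs_shiftedCentralBinomSum_le hx.le h2x) fun j => ?_
    · rw [abs_inv, abs_of_pos hr0]; exact one_lt_inv_iff₀.2 ⟨hr0, hr1⟩
    · rw [hroots, mul_inv_cancel₀ hr0.ne', one_mul, shiftedCentralBinomSum_succ hx.le h2x j]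
      field_simp
      ring
  have hzero : shiftedCentralBinomSum x 0 = (1 + r ^ 2) / (1 - r ^ 2) := by
    have := shiftedCentralBinomSum_zero hx.le h2x
    rw [hgeom 1, pow_one, hx_def] at this
    rw [eq_div_iff (by nlinarith)]
    field_simp at this
    linarith
  rw [hgeom, hzero, mul_comm]

/-- For all `k ≥ 0`,
`∑_{n=0}^∞ C(2(n+k), n) 6^{-2(n+k)} = (3√2/4)(3-2√2)^{2k}` and
`∑_{n=0}^∞ C(2(n+k)+1, n) 6^{-2(n+k)-1} = (3√2/4)(3-2√2)^{2k+1}`. -/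
theorem seqA_seqB_closed_form (k : ℕ) :
    (∑' n : ℕ, (Nat.choose (2 * (n + k)) n : ℝ) / 6 ^ (2 * (n + k)))
      = (3 * Real.sqrt 2 / 4) * (3 - 2 * Real.sqrt 2) ^ (2 * k) ∧
    (∑' n : ℕ, (Nat.choose (2 * (n + k) + 1) n : ℝ) / 6 ^ (2 * (n + k) + 1))
      = (3 * Real.sqrt 2 / 4) * (3 - 2 * Real.sqrt 2) ^ (2 * k + 1) := by
  set r := 3 - 2 * √2 with hr
  have hsq : √2 ^ 2 = 2 := sq_sqrt zero_le_two
  have hr0 : 0 < r := by nlinarith [sqrt_nonneg 2]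
  have hr1 : r < 1 := by nlinarith [sqrt_nonneg 2]
  have hsum_sq : 1 + r ^ 2 = 6 * r := by rw [hr]; ring_nf; rw [hsq]; ring
  have hx : r / (1 + r ^ 2) = 1 / 6 := by rw [hsum_sq]; field_simp
  have hc : (1 + r ^ 2) / (1 - r ^ 2) = 3 * √2 / 4 := by
    rw [div_eq_div_iff (by nlinarith) (by norm_num), hr]
    linear_combination (12 * √2 - 20) * hsq
  have key : ∀ j, ∑' n : ℕ, ((2 * n + j).choose n : ℝ) / 6 ^ (2 * n + j) =
      3 * √2 / 4 * r ^ j := by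
    intro j
    rw [← hc, ← shiftedCentralBinomSum_eq hr0 hr1, hx]
    simp [shiftedCentralBinomSum, shiftedCentralBinomTerm, div_eq_mul_inv]
  exact ⟨by simpa only [mul_add] using key (2 * k),
    by simpa only [mul_add, add_assoc] using key (2 * k + 1)⟩
end

section
/- Let k ≥ 1, 0 ≤ ν ≤ k-1, Q(x) = ∑_{j=0}^{ν} C(k-1+j, j) x^j, R(x) = (1-x)^k Q(x), and g(x) = R(x) + R(1-x). Then R'(x) = -(k+ν) C(k-1+ν, ν) (1-x)^{k-1} x^{ν}, g is decreasing on [0,1/2] and increasing on [1/2,1], min_{[0,1]} g = g(1/2) = 2^{1-k} ∑_{j=0}^{ν} C(k-1+j, j) 2^{-j} > 0, and max_{[0,1]} g = g(0) = g(1) = 1. -/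
/-!
By induction on `ν`: adding the term `j = ν + 1` to `R` and using
`(ν + 1) C(k + ν, ν + 1) = (k + ν) C(k - 1 + ν, ν)` keeps `R'` a single monomial
`-(k + ν) C(k - 1 + ν, ν) (1 - x)^(k - 1) x^ν`. Hence
`g'(x) = (k + ν) C(k - 1 + ν, ν) (x^(k-1) (1-x)^ν - (1-x)^(k-1) x^ν)`, which is `≤ 0` for
`x ≤ 1 - x` because `ν ≤ k - 1`. Together with the symmetry `g (1 - x) = g x`, this makes `g`
valley-shaped on `[0, 1]` with bottom at `1/2` and value `1` at both ends.
-/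

open Finset Set

/-- The paper's `R` for `k = n + 1`. -/
noncomputable def pseudoSplineR (n ν : ℕ) (x : ℝ) : ℝ :=
  (1 - x) ^ (n + 1) * ∑ j ∈ range (ν + 1), ((n + j).choose j : ℝ) * x ^ j

noncomputable def pseudoSplineG (n ν : ℕ) (x : ℝ) : ℝ :=
  pseudoSplineR n ν x + pseudoSplineR n ν (1 - x)

theorem pseudoSplineR_zero_right (n : ℕ) (x : ℝ) : pseudoSplineR n 0 x = (1 - x) ^ (n + 1) := by
  simp [pseudoSplineR]

theorem pseudoSplineR_succ_right (n ν : ℕ) (x : ℝ) :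
    pseudoSplineR n (ν + 1) x = pseudoSplineR n ν x
      + ((n + (ν + 1)).choose (ν + 1) : ℝ) * ((1 - x) ^ (n + 1) * x ^ (ν + 1)) := by
  simp only [pseudoSplineR, sum_range_succ _ (ν + 1)]
  ring

theorem hasDerivAt_one_sub_pow_succ (m : ℕ) (x : ℝ) :
    HasDerivAt (fun y : ℝ ↦ (1 - y) ^ (m + 1)) (-(m + 1 : ℝ) * (1 - x) ^ m) x := by
  refine (((hasDerivAt_id' x).const_sub 1).pow (m + 1)).congr_deriv ?_
  push_cast
  ring

theorem hasDerivAt_pseudoSplineR (n ν : ℕ) (x : ℝ) :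
    HasDerivAt (pseudoSplineR n ν)
      (-(n + 1 + ν : ℝ) * ((n + ν).choose ν : ℝ) * (1 - x) ^ n * x ^ ν) x := by
  induction ν with
  | zero =>
    rw [funext (pseudoSplineR_zero_right n)]
    exact (hasDerivAt_one_sub_pow_succ n x).congr_deriv (by simp)
  | succ ν ih =>
    rw [funext (pseudoSplineR_succ_right n ν)]
    have hterm := ((hasDerivAt_one_sub_pow_succ n x).mul (hasDerivAt_pow (ν + 1) x)).const_mul
      ((n + (ν + 1)).choose (ν + 1) : ℝ)
    have hchoose : ((n + ν + 1 : ℕ) : ℝ) * ((n + ν).choose ν : ℝ)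
        = ((n + (ν + 1)).choose (ν + 1) : ℝ) * (ν + 1 : ℕ) := by
      exact_mod_cast Nat.add_one_mul_choose_eq (n + ν) ν
    refine (ih.add hterm).congr_deriv ?_
    push_cast at hchoose ⊢
    linear_combination -(1 - x) ^ n * x ^ ν * hchoose

theorem hasDerivAt_pseudoSplineG (n ν : ℕ) (x : ℝ) :
    HasDerivAt (pseudoSplineG n ν)
      ((n + 1 + ν : ℝ) * ((n + ν).choose ν : ℝ) * (x ^ n * (1 - x) ^ ν - (1 - x) ^ n * x ^ ν))
      x := by
  have hreflect := (hasDerivAt_pseudoSplineR n ν (1 - x)).comp x ((hasDerivAt_id x).const_sub 1)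
  refine ((hasDerivAt_pseudoSplineR n ν x).add hreflect).congr_deriv ?_
  simp only [sub_sub_cancel]
  ring

theorem pow_mul_pow_le_pow_mul_pow {R : Type*} [CommSemiring R] [PartialOrder R] [IsOrderedRing R]
    {a b : R} {m n : ℕ} (ha : 0 ≤ a) (hab : a ≤ b) (hmn : m ≤ n) :
    a ^ n * b ^ m ≤ b ^ n * a ^ m := by
  obtain ⟨d, rfl⟩ := Nat.exists_eq_add_of_le hmn
  calc a ^ (m + d) * b ^ m = (a ^ m * b ^ m) * a ^ d := by ring
    _ ≤ (a ^ m * b ^ m) * b ^ d :=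
      mul_le_mul_of_nonneg_left (pow_le_pow_left₀ ha hab d)
        (mul_nonneg (pow_nonneg ha m) (pow_nonneg (ha.trans hab) m))
    _ = b ^ (m + d) * a ^ m := by ring

theorem antitoneOn_pseudoSplineG {n ν : ℕ} (hν : ν ≤ n) :
    AntitoneOn (pseudoSplineG n ν) (Icc 0 (1 / 2)) := by
  refine antitoneOn_of_hasDerivWithinAt_nonpos (convex_Icc _ _)
    (fun x _ ↦ (hasDerivAt_pseudoSplineG n ν x).continuousAt.continuousWithinAt)
    (fun x _ ↦ (hasDerivAt_pseudoSplineG n ν x).hasDerivWithinAt) fun x hx ↦ ?_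
  rw [interior_Icc] at hx
  have hle := pow_mul_pow_le_pow_mul_pow hx.1.le (by linarith [hx.2] : x ≤ 1 - x) hν
  exact mul_nonpos_of_nonneg_of_nonpos (by positivity) (sub_nonpos.2 hle)

theorem pseudoSplineG_one_sub (n ν : ℕ) (x : ℝ) :
    pseudoSplineG n ν (1 - x) = pseudoSplineG n ν x := by
  rw [pseudoSplineG, pseudoSplineG, sub_sub_cancel, add_comm]

theorem monotoneOn_Icc_half_one_of_symm {β : Type*} [Preorder β] {f : ℝ → β}
    (hf : ∀ x, f (1 - x) = f x) (h : AntitoneOn f (Icc 0 (1 / 2))) :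
    MonotoneOn f (Icc (1 / 2) 1) := by
  intro a ha b hb hab
  rw [← hf a, ← hf b]
  exact h ⟨by linarith [hb.2], by linarith [hb.1]⟩ ⟨by linarith [ha.2], by linarith [ha.1]⟩
    (by linarith)

theorem le_of_mem_Icc_of_anti_mono {α β : Type*} [LinearOrder α] [Preorder β] {f : α → β}
    {a b c x : α} {M : β} (h₀ : AntitoneOn f (Icc a c)) (h₁ : MonotoneOn f (Icc c b))
    (ha : f a ≤ M) (hb : f b ≤ M) (hx : x ∈ Icc a b) : f x ≤ M := by
  rcases le_total x c with hxc | hcx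
  · exact (h₀ (left_mem_Icc.2 (hx.1.trans hxc)) ⟨hx.1, hxc⟩ hx.1).trans ha
  · exact (h₁ ⟨hcx, hx.2⟩ (right_mem_Icc.2 (hcx.trans hx.2)) hx.2).trans hb

theorem pseudoSplineG_zero (n ν : ℕ) : pseudoSplineG n ν 0 = 1 := by
  simp [pseudoSplineG, pseudoSplineR, sum_range_succ']

theorem pseudoSplineG_one (n ν : ℕ) : pseudoSplineG n ν 1 = 1 := by
  rw [← pseudoSplineG_one_sub, sub_self, pseudoSplineG_zero]

theorem pseudoSplineG_half (n ν : ℕ) :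
    pseudoSplineG n ν (1 / 2) =
      (2 : ℝ) ^ (-(n : ℤ)) *
        ∑ j ∈ range (ν + 1), ((n + j).choose j : ℝ) * (2 : ℝ) ^ (-(j : ℤ)) := by
  rw [pseudoSplineG, show (1 : ℝ) - 1 / 2 = 1 / 2 by norm_num]
  simp only [pseudoSplineR, zpow_neg, zpow_natCast, one_div, ← inv_pow]
  ring_nf

theorem pseudoSplineG_half_pos (n ν : ℕ) : 0 < pseudoSplineG n ν (1 / 2) := by
  rw [pseudoSplineG_half]
  exact mul_pos (by positivity) <| sum_pos (fun j _ ↦ mul_pos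
    (Nat.cast_pos.2 (Nat.choose_pos (Nat.le_add_left j n))) (by positivity)) nonempty_range_add_one

open Finset Set in
/-- Properties of `R(x) = (1-x)^k Q(x)` and `g(x) = R(x) + R(1-x)` for the primal
pseudo-spline masks: derivative formula for `R`, monotonicity of `g`, and its
minimum and maximum on `[0,1]`. -/
theorem primal_pseudo_spline_extrema (k ν : ℕ) (hk : 1 ≤ k) (hν : ν ≤ k - 1)
    (Q R g : ℝ → ℝ)
    (hQ : ∀ x : ℝ, Q x = ∑ j ∈ range (ν + 1), (Nat.choose (k - 1 + j) j : ℝ) * x ^ j)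
    (hR : ∀ x : ℝ, R x = (1 - x) ^ k * Q x)
    (hg : ∀ x : ℝ, g x = R x + R (1 - x)) :
    (∀ x : ℝ, deriv R x
        = -((k + ν : ℕ) : ℝ) * (Nat.choose (k - 1 + ν) ν : ℝ) * (1 - x) ^ (k - 1) * x ^ ν) ∧
    AntitoneOn g (Icc 0 (1/2)) ∧
    MonotoneOn g (Icc (1/2) 1) ∧
    (∀ x ∈ Icc (0:ℝ) 1, g (1/2) ≤ g x) ∧
    g (1/2) = (2:ℝ) ^ (1 - (k:ℤ)) *
        ∑ j ∈ range (ν + 1), (Nat.choose (k - 1 + j) j : ℝ) * (2:ℝ) ^ (-(j:ℤ)) ∧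
    0 < g (1/2) ∧
    (∀ x ∈ Icc (0:ℝ) 1, g x ≤ 1) ∧
    g 0 = 1 ∧ g 1 = 1 := by
  obtain ⟨n, rfl⟩ : ∃ n, k = n + 1 := ⟨k - 1, by omega⟩
  simp only [Nat.add_sub_cancel] at hν hQ ⊢
  obtain rfl : R = pseudoSplineR n ν := funext fun x ↦ by rw [hR, hQ, pseudoSplineR]
  obtain rfl : g = pseudoSplineG n ν := funext hg
  have hanti := antitoneOn_pseudoSplineG hν
  have hmono := monotoneOn_Icc_half_one_of_symm (pseudoSplineG_one_sub n ν) hanti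
  refine ⟨fun x ↦ ?_, hanti, hmono, fun x hx ↦ isMinOn_Icc_of_anti_mono hanti hmono hx, ?_,
    pseudoSplineG_half_pos n ν, fun x hx ↦ le_of_mem_Icc_of_anti_mono hanti hmono
      (pseudoSplineG_zero n ν).le (pseudoSplineG_one n ν).le hx,
    pseudoSplineG_zero n ν, pseudoSplineG_one n ν⟩
  · rw [(hasDerivAt_pseudoSplineR n ν x).deriv]
    push_cast
    ring
  · rw [pseudoSplineG_half]
    push_cast
    ring_nf
end

section
/- For integers k ≥ 1 and 0 ≤ ν ≤ k-1, the identity 2^{1-k} ∑_{j=0}^{ν} C(k-1+j, j) 2^{-j} = 2^{1-k-ν} ∑_{j=0}^{ν} C(k+ν, j) holds. -/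
open Finset in
lemma pseudo_spline_aux (k : ℕ) (hk : 1 ≤ k) (ν : ℕ) :
    ∑ j ∈ range (ν + 1), Nat.choose (k - 1 + j) j * 2 ^ (ν - j)
      = ∑ j ∈ range (ν + 1), Nat.choose (k + ν) j := by
  induction ν with
  | zero => simp
  | succ ν ih =>
    have h1 : ∑ j ∈ range (ν + 1 + 1), Nat.choose (k - 1 + j) j * 2 ^ (ν + 1 - j)
        = 2 * ∑ j ∈ range (ν + 1), Nat.choose (k - 1 + j) j * 2 ^ (ν - j)
          + Nat.choose (k + ν) (ν + 1) := by
      rw [Finset.sum_range_succ, Finset.mul_sum]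
      have hkν : k - 1 + (ν + 1) = k + ν := by omega
      rw [hkν]
      simp only [Nat.sub_self, pow_zero, mul_one]
      congr 1
      apply Finset.sum_congr rfl
      intro j hj
      have hjν : j ≤ ν := Nat.lt_succ_iff.mp (Finset.mem_range.mp hj)
      have : ν + 1 - j = (ν - j) + 1 := by omega
      rw [this, pow_succ]
      ring
    have h2 : ∑ j ∈ range (ν + 1 + 1), Nat.choose (k + ν + 1) j
        = 2 * ∑ j ∈ range (ν + 1), Nat.choose (k + ν) j
          + Nat.choose (k + ν) (ν + 1) := by
      rw [Finset.sum_range_succ']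
      simp only [Nat.choose_succ_succ, Nat.choose_zero_right, Finset.sum_add_distrib]
      have e0 : ∑ j ∈ range (ν + 1), Nat.choose (k + ν) (j + 1) + Nat.choose (k + ν) 0
          = ∑ j ∈ range (ν + 1 + 1), Nat.choose (k + ν) j :=
        (Finset.sum_range_succ' (fun j => Nat.choose (k + ν) j) (ν + 1)).symm
      have e2 : ∑ j ∈ range (ν + 1 + 1), Nat.choose (k + ν) j
          = ∑ j ∈ range (ν + 1), Nat.choose (k + ν) j + Nat.choose (k + ν) (ν + 1) :=
        Finset.sum_range_succ _ (ν + 1)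
      simp only [Nat.choose_zero_right, Nat.succ_eq_add_one] at e0 e2 ⊢
      omega
    show ∑ j ∈ range (ν + 1 + 1), Nat.choose (k - 1 + j) j * 2 ^ (ν + 1 - j)
        = ∑ j ∈ range (ν + 1 + 1), Nat.choose (k + ν + 1) j
    rw [h1, h2, ih]

open Finset in
/-- For `k ≥ 1` and `0 ≤ ν ≤ k-1`:
`2^{1-k} ∑_{j=0}^{ν} C(k-1+j, j) 2^{-j} = 2^{1-k-ν} ∑_{j=0}^{ν} C(k+ν, j)`. -/
theorem pseudo_spline_min_identity (k ν : ℕ) (hk : 1 ≤ k) (hν : ν ≤ k - 1) :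
    (2:ℝ) ^ (1 - (k:ℤ)) *
        ∑ j ∈ range (ν + 1), (Nat.choose (k - 1 + j) j : ℝ) * (2:ℝ) ^ (-(j:ℤ))
      = (2:ℝ) ^ (1 - (k:ℤ) - (ν:ℤ)) * ∑ j ∈ range (ν + 1), (Nat.choose (k + ν) j : ℝ) := by
  have key := pseudo_spline_aux k hk ν
  have h : ∑ j ∈ range (ν + 1), (Nat.choose (k - 1 + j) j : ℝ) * (2:ℝ) ^ (-(j:ℤ))
      = (2:ℝ) ^ (-(ν:ℤ)) *
        ∑ j ∈ range (ν + 1), ((Nat.choose (k - 1 + j) j * 2 ^ (ν - j) : ℕ) : ℝ) := by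
    rw [Finset.mul_sum]
    apply Finset.sum_congr rfl
    intro j hj
    have hjν : j ≤ ν := Nat.lt_succ_iff.mp (Finset.mem_range.mp hj)
    push_cast
    rw [← zpow_natCast (2:ℝ) (ν - j), show ((ν - j : ℕ) : ℤ) = (ν:ℤ) - j by omega,
      show -(j:ℤ) = ((ν:ℤ) - j) + -(ν:ℤ) by ring, zpow_add₀ (two_ne_zero : (2:ℝ) ≠ 0)]
    ring
  rw [h, ← mul_assoc, ← zpow_add₀ (two_ne_zero : (2:ℝ) ≠ 0),
    show 1 - (k:ℤ) + -(ν:ℤ) = 1 - (k:ℤ) - (ν:ℤ) by ring]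
  congr 1
  rw [← Nat.cast_sum, ← Nat.cast_sum, key]
end

section
/- Let γ ∈ l¹(ℤ) and let c^{(j)} ∈ l∞(ℤ) satisfy ‖Δ c^{(j)}‖_∞ ≤ K·2^{-j}. Define c^{(ℓ)} = γ * (c^{(ℓ+1)} ↓ 2) for 0 ≤ ℓ ≤ j-1. Then ‖Δ c^{(ℓ)}‖_∞ ≤ K (2‖γ‖₁)^{j-ℓ} 2^{-j} for 0 ≤ ℓ ≤ j. -/
set_option maxHeartbeats 1000000


/-- Decay of differences of the approximation coefficients: if
`‖Δ c^{(j)}‖_∞ ≤ K 2^{-j}` and `c^{(ℓ)} = γ * (c^{(ℓ+1)} ↓ 2)` for `0 ≤ ℓ ≤ j-1`,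
then `‖Δ c^{(ℓ)}‖_∞ ≤ K (2‖γ‖₁)^{j-ℓ} 2^{-j}` for `0 ≤ ℓ ≤ j`. -/
theorem decay_of_differences (γ : ℤ → ℝ) (hγ : Summable (fun k : ℤ => |γ k|))
    (j : ℕ) (c : ℕ → ℤ → ℝ) (K : ℝ)
    (hbd : ∃ M : ℝ, ∀ k : ℤ, |c j k| ≤ M)
    (htop : ∀ k : ℤ, |c j (k + 1) - c j k| ≤ K * (2:ℝ) ^ (-(j:ℤ)))
    (hrec : ∀ l : ℕ, l < j → ∀ k : ℤ,
      c l k = ∑' m : ℤ, γ (k - m) * c (l + 1) (2 * m)) :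
    ∀ l : ℕ, l ≤ j → ∀ k : ℤ,
      |c l (k + 1) - c l k|
        ≤ K * (2 * ∑' m : ℤ, |γ m|) ^ (j - l) * (2:ℝ) ^ (-(j:ℤ)) := by
  set S : ℝ := ∑' m : ℤ, |γ m| with hSdef
  have hS : 0 ≤ S := tsum_nonneg fun m => abs_nonneg _
  have h2pos : (0:ℝ) < (2:ℝ) ^ (-(j:ℤ)) := zpow_pos (by norm_num) _
  have hK : 0 ≤ K := by
    have h1 := (abs_nonneg _).trans (htop 0)
    have := le_of_mul_le_mul_right (by simpa using h1) h2pos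
    simpa using this
  have hsum : ∀ k : ℤ, Summable fun m : ℤ => |γ (k - m)| :=
    fun k => ((Equiv.subLeft k).summable_iff).2 hγ
  have hsumeq : ∀ k : ℤ, (∑' m : ℤ, |γ (k - m)|) = S :=
    fun k => (Equiv.subLeft k).tsum_eq (fun m => |γ m|)
  have key : ∀ d l : ℕ, l + d = j →
      ((∃ M : ℝ, 0 ≤ M ∧ ∀ k : ℤ, |c l k| ≤ M) ∧
        (∀ k : ℤ, |c l (k + 1) - c l k| ≤ K * (2 * S) ^ d * (2:ℝ) ^ (-(j:ℤ)))) := by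
    intro d
    induction d with
    | zero =>
      intro l hl
      simp only [Nat.add_zero] at hl
      subst hl
      refine ⟨?_, ?_⟩
      · obtain ⟨M, hM⟩ := hbd
        exact ⟨max M 0, le_max_right _ _, fun k => (hM k).trans (le_max_left _ _)⟩
      · intro k; simpa using htop k
    | succ d ih =>
      intro l hl
      have hlj : l < j := by omega
      have hl1 : l + 1 + d = j := by omega
      obtain ⟨⟨M, hM0, hM⟩, hest⟩ := ih (l + 1) hl1
      set B : ℝ := K * (2 * S) ^ d * (2:ℝ) ^ (-(j:ℤ)) with hBdef
      have hB0 : 0 ≤ B := by positivity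
      -- summability of the basic series
      have hsumm : ∀ k : ℤ, Summable fun m : ℤ => γ (k - m) * c (l + 1) (2 * m) := by
        intro k
        refine Summable.of_abs (Summable.of_nonneg_of_le (fun m => abs_nonneg _)
          (fun m => ?_) ((hsum k).mul_right M))
        rw [abs_mul]
        exact mul_le_mul_of_nonneg_left (hM _) (abs_nonneg _)
      -- boundedness of c l
      have hbound : ∀ k : ℤ, |c l k| ≤ S * M := by
        intro k
        rw [hrec l hlj k]
        have habs : Summable fun m : ℤ => |γ (k - m) * c (l + 1) (2 * m)| := by
          refine Summable.of_nonneg_of_le (fun m => abs_nonneg _)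
            (fun m => ?_) ((hsum k).mul_right M)
          rw [abs_mul]
          exact mul_le_mul_of_nonneg_left (hM _) (abs_nonneg _)
        calc |∑' m : ℤ, γ (k - m) * c (l + 1) (2 * m)|
            ≤ ∑' m : ℤ, |γ (k - m) * c (l + 1) (2 * m)| := by
              simpa only [Real.norm_eq_abs] using
                norm_tsum_le_tsum_norm (f := fun m : ℤ => γ (k - m) * c (l + 1) (2 * m))
                  (by simpa only [Real.norm_eq_abs] using habs)
          _ ≤ ∑' m : ℤ, |γ (k - m)| * M := by
              refine Summable.tsum_le_tsum (fun m => ?_) habs ((hsum k).mul_right M)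
              rw [abs_mul]
              exact mul_le_mul_of_nonneg_left (hM _) (abs_nonneg _)
          _ = S * M := by rw [tsum_mul_right, hsumeq k]
      refine ⟨⟨S * M, mul_nonneg hS hM0, hbound⟩, ?_⟩
      intro k
      -- rewrite the difference
      have e1 : c l (k + 1) = ∑' m : ℤ, γ (k - m) * c (l + 1) (2 * m + 2) := by
        rw [hrec l hlj (k + 1)]
        rw [← (Equiv.addRight (1:ℤ)).tsum_eq (fun m => γ (k + 1 - m) * c (l + 1) (2 * m))]
        refine tsum_congr fun m => ?_
        simp only [Equiv.coe_addRight]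
        rw [show (k + 1 - (m + 1) : ℤ) = k - m by ring, show (2 * (m + 1) : ℤ) = 2 * m + 2 by ring]
      have e2 : c l (k + 1) - c l k
          = ∑' m : ℤ, γ (k - m) * (c (l + 1) (2 * m + 2) - c (l + 1) (2 * m)) := by
        rw [e1, hrec l hlj k]
        rw [← Summable.tsum_sub ?_ (hsumm k)]
        · exact tsum_congr fun m => by ring
        · -- summability of shifted series
          have := (hsumm (k + 1))
          rw [← (Equiv.addRight (1:ℤ)).summable_iff] at this
          refine this.congr fun m => ?_
          simp only [Function.comp_apply, Equiv.coe_addRight]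
          rw [show (k + 1 - (m + 1) : ℤ) = k - m by ring, show (2 * (m + 1) : ℤ) = 2 * m + 2 by ring]
      rw [e2]
      have hdiff : ∀ m : ℤ, |c (l + 1) (2 * m + 2) - c (l + 1) (2 * m)| ≤ 2 * B := by
        intro m
        have h1 := hest (2 * m)
        have h2 := hest (2 * m + 1)
        calc |c (l + 1) (2 * m + 2) - c (l + 1) (2 * m)|
            ≤ |c (l + 1) (2 * m + 2) - c (l + 1) (2 * m + 1)|
              + |c (l + 1) (2 * m + 1) - c (l + 1) (2 * m)| := abs_sub_le _ _ _
          _ ≤ B + B := by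
              refine add_le_add ?_ h1
              have : (2 * m + 1 + 1 : ℤ) = 2 * m + 2 := by ring
              rw [this] at h2; exact h2
          _ = 2 * B := by ring
      have habs2 : Summable fun m : ℤ => |γ (k - m) * (c (l + 1) (2 * m + 2) - c (l + 1) (2 * m))| := by
        refine Summable.of_nonneg_of_le (fun m => abs_nonneg _)
          (fun m => ?_) ((hsum k).mul_right (2 * B))
        rw [abs_mul]
        exact mul_le_mul_of_nonneg_left (hdiff m) (abs_nonneg _)
      calc |∑' m : ℤ, γ (k - m) * (c (l + 1) (2 * m + 2) - c (l + 1) (2 * m))|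
          ≤ ∑' m : ℤ, |γ (k - m) * (c (l + 1) (2 * m + 2) - c (l + 1) (2 * m))| := by
            simpa only [Real.norm_eq_abs] using
              norm_tsum_le_tsum_norm
                (f := fun m : ℤ => γ (k - m) * (c (l + 1) (2 * m + 2) - c (l + 1) (2 * m)))
                (by simpa only [Real.norm_eq_abs] using habs2)
        _ ≤ ∑' m : ℤ, |γ (k - m)| * (2 * B) := by
            refine Summable.tsum_le_tsum (fun m => ?_) habs2 ((hsum k).mul_right (2 * B))
            rw [abs_mul]
            exact mul_le_mul_of_nonneg_left (hdiff m) (abs_nonneg _)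
        _ = S * (2 * B) := by rw [tsum_mul_right, hsumeq k]
        _ = K * (2 * S) ^ (d + 1) * (2:ℝ) ^ (-(j:ℤ)) := by rw [hBdef]; ring
  intro l hl k
  have hdl : l + (j - l) = j := by omega
  have := (key (j - l) l hdl).2 k
  exact this
end

section
/- Let α, γ ∈ l¹(ℤ) satisfy ∑_k α_{2k} = ∑_k α_{2k+1} = ∑_k γ_k = 1, K_α := ∑_k |α_k||k| < ∞, and K_γ := 2∑_k |γ_k||k| < ∞. For c ∈ l∞(ℤ) with ‖Δc‖_∞ < ∞, define η = γ*(c↓2) and d = c - S_α η. Then ‖d‖_∞ ≤ (K_γ ‖α‖₁ + K_α ‖γ‖₁) ‖Δ c‖_∞. -/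
open Function

lemma lip_step (c : ℤ → ℝ) (M : ℝ) (hΔ : ∀ k : ℤ, |c (k + 1) - c k| ≤ M)
    (b : ℤ) : ∀ n : ℕ, |c (b + n) - c b| ≤ n * M := by
  intro n
  induction n with
  | zero => simp
  | succ n ih =>
    have e : (b + ((n : ℕ) + 1 : ℕ) : ℤ) = (b + n) + 1 := by push_cast; ring
    rw [e]
    calc |c (b + n + 1) - c b|
        = |(c (b + n + 1) - c (b + n)) + (c (b + n) - c b)| := by ring_nf
      _ ≤ |c (b + n + 1) - c (b + n)| + |c (b + n) - c b| := abs_add_le _ _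
      _ ≤ M + n * M := add_le_add (hΔ _) ih
      _ = ((n : ℕ) + 1 : ℕ) * M := by push_cast; ring

lemma lip (c : ℤ → ℝ) (M : ℝ) (hΔ : ∀ k : ℤ, |c (k + 1) - c k| ≤ M)
    (a b : ℤ) : |c a - c b| ≤ |(a : ℝ) - (b : ℝ)| * M := by
  rcases le_total b a with h | h
  · obtain ⟨n, rfl⟩ : ∃ n : ℕ, a = b + n := ⟨(a - b).toNat, by omega⟩
    have h2 := lip_step c M hΔ b n
    have e : |((b + n : ℤ) : ℝ) - (b : ℝ)| = (n : ℝ) := by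
      push_cast; simp
    rw [e]; exact h2
  · obtain ⟨n, rfl⟩ : ∃ n : ℕ, b = a + n := ⟨(b - a).toNat, by omega⟩
    have h2 := lip_step c M hΔ a n
    have e : |(a : ℝ) - ((a + n : ℤ) : ℝ)| = (n : ℝ) := by
      push_cast; rw [abs_sub_comm]; simp
    rw [abs_sub_comm, e]; exact h2

set_option maxHeartbeats 2000000 in
/-- Bound on the detail coefficients: under the normalization conditions
`∑_k α_{2k} = ∑_k α_{2k+1} = ∑_k γ_k = 1` and the moment conditions
`K_α = ∑_k |α_k||k| < ∞`, `K_γ = 2∑_k |γ_k||k| < ∞`, the detail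
`d = c - S_α (γ * (c↓2))` satisfies `‖d‖_∞ ≤ (K_γ‖α‖₁ + K_α‖γ‖₁)‖Δc‖_∞`. -/
theorem detail_coefficient_bound (α γ : ℤ → ℝ)
    (hα : Summable (fun k : ℤ => |α k|)) (hγ : Summable (fun k : ℤ => |γ k|))
    (hα1 : Summable (fun k : ℤ => |α k| * |(k:ℝ)|))
    (hγ1 : Summable (fun k : ℤ => |γ k| * |(k:ℝ)|))
    (hnorm_ev : (∑' k : ℤ, α (2 * k)) = 1)
    (hnorm_od : (∑' k : ℤ, α (2 * k + 1)) = 1)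
    (hnorm_γ : (∑' k : ℤ, γ k) = 1)
    (c : ℤ → ℝ) (hc : ∃ M : ℝ, ∀ k : ℤ, |c k| ≤ M)
    (M : ℝ) (hΔ : ∀ k : ℤ, |c (k + 1) - c k| ≤ M) :
    ∀ k : ℤ,
      |c k - ∑' s : ℤ, α (k - 2 * s) * (∑' m : ℤ, γ (s - m) * c (2 * m))|
        ≤ ((2 * ∑' n : ℤ, |γ n| * |(n:ℝ)|) * (∑' n : ℤ, |α n|)
            + (∑' n : ℤ, |α n| * |(n:ℝ)|) * (∑' n : ℤ, |γ n|)) * M := by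
  intro k
  obtain ⟨C, hC⟩ := hc
  have hM : 0 ≤ M := le_trans (abs_nonneg _) (hΔ 0)
  have hC0 : 0 ≤ C := le_trans (abs_nonneg _) (hC 0)
  set Gα := ∑' n : ℤ, |α n| with hGαdef
  set Gγ := ∑' n : ℤ, |γ n| with hGγdef
  set Kα := ∑' n : ℤ, |α n| * |(n:ℝ)| with hKαdef
  set Kγ := ∑' n : ℤ, |γ n| * |(n:ℝ)| with hKγdef
  have hGγ0 : 0 ≤ Gγ := tsum_nonneg fun n => abs_nonneg _
  have hKγ0 : 0 ≤ Kγ := tsum_nonneg fun n => mul_nonneg (abs_nonneg _) (abs_nonneg _)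
  have hαs : Summable α := hα.of_abs
  have hγs : Summable γ := hγ.of_abs
  have injk : Injective (fun s : ℤ => k - 2 * s) := by
    intro a b h; dsimp at h; omega
  -- summability of reindexed α families
  have A1 : Summable (fun s : ℤ => |α (k - 2 * s)|) := hα.comp_injective injk
  have A2 : Summable (fun s : ℤ => α (k - 2 * s)) := hαs.comp_injective injk
  have A3 : Summable (fun s : ℤ => |α (k - 2 * s)| * |((k : ℝ) - 2 * s)|) := by
    have h := hα1.comp_injective injk
    have e : ((fun n : ℤ => |α n| * |(n : ℝ)|) ∘ fun s : ℤ => k - 2 * s)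
        = fun s : ℤ => |α (k - 2 * s)| * |((k : ℝ) - 2 * s)| := by
      funext s; simp only [Function.comp_apply]; push_cast; ring_nf
    rwa [e] at h
  -- γ reindexing at each s
  have Gsum : ∀ s : ℤ, (∑' m : ℤ, γ (s - m)) = 1 := by
    intro s
    rw [← hnorm_γ]
    simpa using (Equiv.subLeft s).tsum_eq γ
  have Gabs : ∀ s : ℤ, (∑' m : ℤ, |γ (s - m)|) = Gγ := by
    intro s
    simpa using (Equiv.subLeft s).tsum_eq (fun n => |γ n|)
  have Gmom : ∀ s : ℤ, (∑' m : ℤ, |γ (s - m)| * |((s : ℝ) - m)|) = Kγ := by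
    intro s
    have := (Equiv.subLeft s).tsum_eq (fun n : ℤ => |γ n| * |(n : ℝ)|)
    simpa [Int.cast_sub] using this
  have Sγ : ∀ s : ℤ, Summable (fun m : ℤ => γ (s - m)) := fun s =>
    ((Equiv.subLeft s).summable_iff).2 hγs
  have Sγabs : ∀ s : ℤ, Summable (fun m : ℤ => |γ (s - m)|) := fun s =>
    ((Equiv.subLeft s).summable_iff).2 hγ
  have Sγmom : ∀ s : ℤ, Summable (fun m : ℤ => |γ (s - m)| * |((s : ℝ) - m)|) := by
    intro s
    have h := ((Equiv.subLeft s).summable_iff (f := fun n : ℤ => |γ n| * |(n : ℝ)|)).2 hγ1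
    have e : ((fun n : ℤ => |γ n| * |(n : ℝ)|) ∘ ⇑(Equiv.subLeft s))
        = fun m : ℤ => |γ (s - m)| * |((s : ℝ) - m)| := by
      funext m; simp only [Function.comp_apply, Equiv.subLeft_apply]; push_cast; ring_nf
    rwa [e] at h
  -- α normalization for fixed k
  have hsumα : (∑' s : ℤ, α (k - 2 * s)) = 1 := by
    rcases Int.even_or_odd k with ⟨j, hj⟩ | ⟨j, hj⟩
    · have e2 : ∀ s : ℤ, k - 2 * s = 2 * (j - s) := fun s => by omega
      calc (∑' s : ℤ, α (k - 2 * s)) = ∑' s : ℤ, α (2 * (j - s)) := by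
            simp only [e2]
        _ = ∑' t : ℤ, α (2 * t) := by
            simpa using (Equiv.subLeft j).tsum_eq (fun t => α (2 * t))
        _ = 1 := hnorm_ev
    · have e2 : ∀ s : ℤ, k - 2 * s = 2 * (j - s) + 1 := fun s => by omega
      calc (∑' s : ℤ, α (k - 2 * s)) = ∑' s : ℤ, α (2 * (j - s) + 1) := by
            simp only [e2]
        _ = ∑' t : ℤ, α (2 * t + 1) := by
            simpa using (Equiv.subLeft j).tsum_eq (fun t => α (2 * t + 1))
        _ = 1 := hnorm_od
  -- η and its bounds
  set η : ℤ → ℝ := fun s => ∑' m : ℤ, γ (s - m) * c (2 * m) with hηdef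
  have habsγc : ∀ s : ℤ, Summable (fun m : ℤ => |γ (s - m) * c (2 * m)|) := by
    intro s
    refine Summable.of_nonneg_of_le (fun m => abs_nonneg _) (fun m => ?_)
      ((Sγabs s).mul_right C)
    rw [abs_mul]
    exact mul_le_mul_of_nonneg_left (hC _) (abs_nonneg _)
  have hγc : ∀ s : ℤ, Summable (fun m : ℤ => γ (s - m) * c (2 * m)) := fun s =>
    (habsγc s).of_abs
  have ηb : ∀ s : ℤ, |η s| ≤ Gγ * C := by
    intro s
    calc |η s| ≤ ∑' m : ℤ, |γ (s - m) * c (2 * m)| := by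
          simpa only [Real.norm_eq_abs] using
            norm_tsum_le_tsum_norm (f := fun m : ℤ => γ (s - m) * c (2 * m))
              (by simpa only [Real.norm_eq_abs] using habsγc s)
      _ ≤ ∑' m : ℤ, |γ (s - m)| * C := by
          refine Summable.tsum_le_tsum (fun m => ?_) (habsγc s) ((Sγabs s).mul_right C)
          rw [abs_mul]
          exact mul_le_mul_of_nonneg_left (hC _) (abs_nonneg _)
      _ = Gγ * C := by rw [tsum_mul_right, Gabs s]
  -- summability of outer families
  have SAabs : Summable (fun s : ℤ => |α (k - 2 * s) * (c k - η s)|) := by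
    refine Summable.of_nonneg_of_le (fun s => abs_nonneg _) (fun s => ?_)
      (A1.mul_right (C + Gγ * C))
    rw [abs_mul]
    refine mul_le_mul_of_nonneg_left ?_ (abs_nonneg _)
    calc |c k - η s| ≤ |c k| + |η s| := abs_sub _ _
      _ ≤ C + Gγ * C := add_le_add (hC _) (ηb s)
  have SA : Summable (fun s : ℤ => α (k - 2 * s) * (c k - η s)) := SAabs.of_abs
  have SAη : Summable (fun s : ℤ => α (k - 2 * s) * η s) := by
    refine Summable.of_abs (Summable.of_nonneg_of_le (fun s => abs_nonneg _)
      (fun s => ?_) (A1.mul_right (Gγ * C)))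
    rw [abs_mul]
    exact mul_le_mul_of_nonneg_left (ηb s) (abs_nonneg _)
  -- key decomposition
  have key : c k - ∑' s : ℤ, α (k - 2 * s) * η s
      = ∑' s : ℤ, α (k - 2 * s) * (c k - η s) := by
    have e : (fun s : ℤ => α (k - 2 * s) * (c k - η s))
        = fun s : ℤ => α (k - 2 * s) * c k - α (k - 2 * s) * η s := by
      funext s; ring
    rw [e, Summable.tsum_sub (A2.mul_right (c k)) SAη, tsum_mul_right, hsumα, one_mul]
  have inner : ∀ s : ℤ, c k - η s = ∑' m : ℤ, γ (s - m) * (c k - c (2 * m)) := by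
    intro s
    have e : (fun m : ℤ => γ (s - m) * (c k - c (2 * m)))
        = fun m : ℤ => γ (s - m) * c k - γ (s - m) * c (2 * m) := by
      funext m; ring
    rw [e, Summable.tsum_sub ((Sγ s).mul_right (c k)) (hγc s), tsum_mul_right, Gsum s, one_mul]
  -- inner bound
  have innerB : ∀ s : ℤ, |c k - η s| ≤ (|((k : ℝ) - 2 * s)| * Gγ + 2 * Kγ) * M := by
    intro s
    rw [inner s]
    have hs1 : Summable (fun m : ℤ => |γ (s - m) * (c k - c (2 * m))|) := by
      refine Summable.of_nonneg_of_le (fun m => abs_nonneg _) (fun m => ?_)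
        ((Sγabs s).mul_right (C + C))
      rw [abs_mul]
      refine mul_le_mul_of_nonneg_left ?_ (abs_nonneg _)
      calc |c k - c (2 * m)| ≤ |c k| + |c (2 * m)| := abs_sub _ _
        _ ≤ C + C := add_le_add (hC _) (hC _)
    have hs2 : Summable (fun m : ℤ =>
        |γ (s - m)| * |((k : ℝ) - 2 * s)| * M + |γ (s - m)| * |((s : ℝ) - m)| * (2 * M)) :=
      (((Sγabs s).mul_right _).mul_right M).add ((Sγmom s).mul_right (2 * M))
    calc |∑' m : ℤ, γ (s - m) * (c k - c (2 * m))|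
        ≤ ∑' m : ℤ, |γ (s - m) * (c k - c (2 * m))| := by
          simpa only [Real.norm_eq_abs] using
            norm_tsum_le_tsum_norm (f := fun m : ℤ => γ (s - m) * (c k - c (2 * m)))
              (by simpa only [Real.norm_eq_abs] using hs1)
      _ ≤ ∑' m : ℤ, (|γ (s - m)| * |((k : ℝ) - 2 * s)| * M
            + |γ (s - m)| * |((s : ℝ) - m)| * (2 * M)) := by
          refine Summable.tsum_le_tsum (fun m => ?_) hs1 hs2
          rw [abs_mul]
          have hlip : |c k - c (2 * m)| ≤ |(k : ℝ) - 2 * m| * M := by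
            have := lip c M hΔ k (2 * m)
            simpa [Int.cast_mul] using this
          have htri : |(k : ℝ) - 2 * m| ≤ |(k : ℝ) - 2 * s| + 2 * |(s : ℝ) - m| := by
            have e : (k : ℝ) - 2 * m = ((k : ℝ) - 2 * s) + 2 * ((s : ℝ) - m) := by ring
            rw [e]
            refine (abs_add_le _ _).trans ?_
            rw [abs_mul, abs_two]
          calc |γ (s - m)| * |c k - c (2 * m)|
              ≤ |γ (s - m)| * ((|(k : ℝ) - 2 * s| + 2 * |(s : ℝ) - m|) * M) := by
                refine mul_le_mul_of_nonneg_left ?_ (abs_nonneg _)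
                exact hlip.trans (mul_le_mul_of_nonneg_right htri hM)
            _ = |γ (s - m)| * |((k : ℝ) - 2 * s)| * M
                + |γ (s - m)| * |((s : ℝ) - m)| * (2 * M) := by ring
      _ = (∑' m : ℤ, |γ (s - m)| * |((k : ℝ) - 2 * s)| * M)
            + ∑' m : ℤ, |γ (s - m)| * |((s : ℝ) - m)| * (2 * M) := by
          exact Summable.tsum_add (((Sγabs s).mul_right _).mul_right M) ((Sγmom s).mul_right (2 * M))
      _ = (|((k : ℝ) - 2 * s)| * Gγ + 2 * Kγ) * M := by
          have e1 : (fun m : ℤ => |γ (s - m)| * |((k : ℝ) - 2 * s)| * M)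
              = fun m : ℤ => |γ (s - m)| * (|((k : ℝ) - 2 * s)| * M) := by
            funext m; ring
          rw [e1, tsum_mul_right, tsum_mul_right, Gabs s, Gmom s]
          ring
  -- summability of the outer bound
  have S3 : Summable (fun s : ℤ =>
      |α (k - 2 * s)| * ((|((k : ℝ) - 2 * s)| * Gγ + 2 * Kγ) * M)) := by
    have e : (fun s : ℤ => |α (k - 2 * s)| * ((|((k : ℝ) - 2 * s)| * Gγ + 2 * Kγ) * M))
        = fun s : ℤ => |α (k - 2 * s)| * |((k : ℝ) - 2 * s)| * (Gγ * M)
          + |α (k - 2 * s)| * (2 * Kγ * M) := by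
      funext s; ring
    rw [e]
    exact (A3.mul_right (Gγ * M)).add (A1.mul_right (2 * Kγ * M))
  -- injective comparison bounds
  have T1 : (∑' s : ℤ, |α (k - 2 * s)| * |((k : ℝ) - 2 * s)|) ≤ Kα := by
    refine Summable.tsum_le_tsum_of_inj (fun s : ℤ => k - 2 * s) injk
      (fun n _ => mul_nonneg (abs_nonneg _) (abs_nonneg _)) (fun s => ?_) A3 hα1
    push_cast
    exact le_rfl
  have T2 : (∑' s : ℤ, |α (k - 2 * s)|) ≤ Gα :=
    Summable.tsum_le_tsum_of_inj (fun s : ℤ => k - 2 * s) injk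
      (fun n _ => abs_nonneg _) (fun s => le_rfl) A1 hα
  -- final chain
  calc |c k - ∑' s : ℤ, α (k - 2 * s) * η s|
      = |∑' s : ℤ, α (k - 2 * s) * (c k - η s)| := by rw [key]
    _ ≤ ∑' s : ℤ, |α (k - 2 * s) * (c k - η s)| := by
        simpa only [Real.norm_eq_abs] using
          norm_tsum_le_tsum_norm (f := fun s : ℤ => α (k - 2 * s) * (c k - η s))
            (by simpa only [Real.norm_eq_abs] using SAabs)
    _ ≤ ∑' s : ℤ, |α (k - 2 * s)| * ((|((k : ℝ) - 2 * s)| * Gγ + 2 * Kγ) * M) := by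
        refine Summable.tsum_le_tsum (fun s => ?_) SAabs S3
        rw [abs_mul]
        exact mul_le_mul_of_nonneg_left (innerB s) (abs_nonneg _)
    _ = (∑' s : ℤ, |α (k - 2 * s)| * |((k : ℝ) - 2 * s)|) * (Gγ * M)
          + (∑' s : ℤ, |α (k - 2 * s)|) * (2 * Kγ * M) := by
        have e : (fun s : ℤ => |α (k - 2 * s)| * ((|((k : ℝ) - 2 * s)| * Gγ + 2 * Kγ) * M))
            = fun s : ℤ => |α (k - 2 * s)| * |((k : ℝ) - 2 * s)| * (Gγ * M)
              + |α (k - 2 * s)| * (2 * Kγ * M) := by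
          funext s; ring
        rw [e, Summable.tsum_add (A3.mul_right (Gγ * M)) (A1.mul_right (2 * Kγ * M)),
          tsum_mul_right, tsum_mul_right]
    _ ≤ Kα * (Gγ * M) + Gα * (2 * Kγ * M) := by
        refine add_le_add (mul_le_mul_of_nonneg_right T1 (by positivity))
          (mul_le_mul_of_nonneg_right T2 (by positivity))
    _ = (2 * Kγ * Gα + Kα * Gγ) * M := by ring
end
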